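/- arXiv:2209.06437 — 6 statements merged into one kernel-verified Lean document; each statement's English description precedes it below -/
import Mathlib

section
/- Let $v : 2^G \to \mathbb{R}_{\ge 0}$ be a monotone, submodular, normalized valuation on a finite set $G$, and let $A, B \subseteq G$ be disjoint with weights $w_i, w_j > 0$ and parameters $x, y \in [0,1]$. If either $v(A) = v(A \cup B)$, or there exists $g \in B$ such that $\frac{v(A) + y(v(A \cup \{g\}) - v(A))}{w_i} \ge \frac{v(B) - x(v(B) - v(B \setminus \{g\}))}{w_j}$, then either $B = \emptyset$ or there exists $g \in B$ such that $\frac{v(A) + y(v(A \cup \{g\}) - v(A))}{w_i} \ge \frac{v(A \cup B) - v(A) - x(v(A \cup B) - v(A \cup B \setminus \{g\}))}{w_j}$. (That is, the TWEF$(x,y)$ condition between a pair of agents implies the WMEF$(x,y)$ condition.) -/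
lemma stmt0_subadd {α : Type*} [DecidableEq α] (G : Finset α) (v : Finset α → ℝ)
    (hsub : ∀ S T : Finset α, S ⊆ T → T ⊆ G → ∀ g ∈ G, g ∉ T →
      v (insert g S) - v S ≥ v (insert g T) - v T)
    (hnorm : v ∅ = 0) :
    ∀ A : Finset α, A ⊆ G → ∀ B : Finset α, B ⊆ G → Disjoint A B →
      v (A ∪ B) ≤ v A + v B := by
  intro A
  induction A using Finset.induction_on with
  | empty => intro _ B hB _; simp [hnorm]
  | @insert a A ha ih =>
    intro hAG B hBG hd
    have haG : a ∈ G := hAG (Finset.mem_insert_self a A)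
    have hAG' : A ⊆ G := (Finset.subset_insert a A).trans hAG
    have hd' : Disjoint A B := hd.mono_left (Finset.subset_insert a A)
    have haB : a ∉ B := Finset.disjoint_left.mp hd (Finset.mem_insert_self a A)
    have hanotAB : a ∉ A ∪ B := by simp [ha, haB]
    have hABG : A ∪ B ⊆ G := Finset.union_subset hAG' hBG
    have h1 := hsub A (A ∪ B) Finset.subset_union_left hABG a haG hanotAB
    have h2 := ih hAG' B hBG hd'
    have he : insert a A ∪ B = insert a (A ∪ B) := by rw [Finset.insert_union]
    rw [he]; linarith

theorem stmt0 {α : Type*} [DecidableEq α] (G : Finset α) (v : Finset α → ℝ)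
    (hnn : ∀ S ⊆ G, 0 ≤ v S)
    (hmono : ∀ S T : Finset α, S ⊆ T → T ⊆ G → v S ≤ v T)
    (hsub : ∀ S T : Finset α, S ⊆ T → T ⊆ G → ∀ g ∈ G, g ∉ T →
      v (insert g S) - v S ≥ v (insert g T) - v T)
    (hnorm : v ∅ = 0)
    (A B : Finset α) (hA : A ⊆ G) (hB : B ⊆ G) (hdisj : Disjoint A B)
    (wi wj : ℝ) (hwi : 0 < wi) (hwj : 0 < wj)
    (x y : ℝ) (hx : x ∈ Set.Icc (0:ℝ) 1) (hy : y ∈ Set.Icc (0:ℝ) 1)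
    (h : v A = v (A ∪ B) ∨ ∃ g ∈ B,
      (v A + y * (v (insert g A) - v A)) / wi ≥
        (v B - x * (v B - v (B.erase g))) / wj) :
    B = ∅ ∨ ∃ g ∈ B,
      (v A + y * (v (insert g A) - v A)) / wi ≥
        (v (A ∪ B) - v A - x * (v (A ∪ B) - v ((A ∪ B).erase g))) / wj := by
  by_cases hBe : B = ∅
  · exact Or.inl hBe
  right
  have hAB : A ∪ B ⊆ G := Finset.union_subset hA hB
  rcases h with heq | ⟨g, hgB, hineq⟩
  · obtain ⟨g, hg⟩ := Finset.nonempty_iff_ne_empty.mpr hBe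
    refine ⟨g, hg, ?_⟩
    have hgG : g ∈ G := hB hg
    have hmono1 : v ((A ∪ B).erase g) ≤ v (A ∪ B) :=
      hmono _ _ (Finset.erase_subset g _) hAB
    have hLHS : 0 ≤ (v A + y * (v (insert g A) - v A)) / wi := by
      apply div_nonneg _ hwi.le
      have h1 : 0 ≤ v A := hnn A hA
      have h2 : v A ≤ v (insert g A) :=
        hmono A (insert g A) (Finset.subset_insert g A) (Finset.insert_subset hgG hA)
      nlinarith [hy.1, hy.2]
    have hRHS : (v (A ∪ B) - v A - x * (v (A ∪ B) - v ((A ∪ B).erase g))) / wj ≤ 0 := by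
      apply div_nonpos_of_nonpos_of_nonneg _ hwj.le
      nlinarith [hx.1, hx.2]
    linarith
  · refine ⟨g, hgB, ?_⟩
    have hgG : g ∈ G := hB hgB
    have hgA : g ∉ A := Finset.disjoint_right.mp hdisj hgB
    have herase : (A ∪ B).erase g = A ∪ B.erase g := by
      rw [Finset.erase_union_distrib, Finset.erase_eq_of_notMem hgA]
    have hBeG : B.erase g ⊆ G := (Finset.erase_subset g B).trans hB
    have hd2 : Disjoint A (B.erase g) := hdisj.mono_right (Finset.erase_subset g B)
    have h1 : v (A ∪ B) ≤ v A + v B := stmt0_subadd G v hsub hnorm A hA B hB hdisj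
    have h2 : v (A ∪ B.erase g) ≤ v A + v (B.erase g) :=
      stmt0_subadd G v hsub hnorm A hA (B.erase g) hBeG hd2
    rw [herase]
    refine le_trans ?_ hineq
    rw [div_le_div_iff₀ hwj hwj]
    have t1 : 0 ≤ (1 - x) * (v A + v B - v (A ∪ B)) :=
      mul_nonneg (by linarith [hx.2]) (by linarith)
    have t2 : 0 ≤ x * (v A + v (B.erase g) - v (A ∪ B.erase g)) :=
      mul_nonneg hx.1 (by linarith)
    nlinarith
end

section
/- Let $v : 2^G \to \mathbb{R}_{\ge 0}$ be a submodular valuation, $A, B \subseteq G$ disjoint, $h \notin A \cup B$, $g \in B$, and $x \in [0,1]$. Then $v(A \cup B) - v(A) - x(v(A \cup B) - v(A \cup B \setminus \{g\})) \ge v(A \cup B \cup \{h\}) - v(A \cup \{h\}) - x(v(A \cup B \cup \{h\}) - v(A \cup B \cup \{h\} \setminus \{g\}))$. (Adding a good $h$ to the envying agent's bundle preserves the WMEF$(x,1-x)$ right-hand side inequality.) -/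
theorem stmt5 {α : Type*} [DecidableEq α] (G : Finset α) (v : Finset α → ℝ)
    (hnn : ∀ S ⊆ G, 0 ≤ v S)
    (hsub : ∀ S T : Finset α, S ⊆ T → T ⊆ G → ∀ g ∈ G, g ∉ T →
      v (insert g S) - v S ≥ v (insert g T) - v T)
    (A B : Finset α) (hA : A ⊆ G) (hB : B ⊆ G) (hdisj : Disjoint A B)
    (h : α) (hh : h ∈ G) (hhAB : h ∉ A ∪ B)
    (g : α) (hg : g ∈ B)
    (x : ℝ) (hx : x ∈ Set.Icc (0:ℝ) 1) :
    v (A ∪ B) - v A - x * (v (A ∪ B) - v ((A ∪ B).erase g)) ≥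
      v (insert h (A ∪ B)) - v (insert h A) -
        x * (v (insert h (A ∪ B)) - v ((insert h (A ∪ B)).erase g)) := by
  obtain ⟨hx0, hx1⟩ := hx
  set E := (A ∪ B).erase g with hE
  have hgAB : g ∈ A ∪ B := Finset.mem_union_right _ hg
  have hgG : g ∈ G := hB hg
  have hABG : A ∪ B ⊆ G := Finset.union_subset hA hB
  have hEG : E ⊆ G := (Finset.erase_subset _ _).trans hABG
  have hgh : g ≠ h := fun e => hhAB (e ▸ hgAB)
  have hgA : g ∉ A := fun hgA => (Finset.disjoint_left.mp hdisj hgA) hg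
  have hAE : A ⊆ E := fun a ha => Finset.mem_erase.mpr ⟨fun e => hgA (e ▸ ha),
    Finset.mem_union_left _ ha⟩
  have hhE : h ∉ E := fun he => hhAB (Finset.erase_subset _ _ he)
  have hgE : g ∉ E := Finset.notMem_erase _ _
  have hghE : g ∉ insert h E := by
    simp [Finset.mem_insert, hgh, hgE]
  have hinsgE : insert g E = A ∪ B := Finset.insert_erase hgAB
  have hinsghE : insert g (insert h E) = insert h (A ∪ B) := by
    rw [Finset.insert_comm, hinsgE]
  have heraseh : (insert h (A ∪ B)).erase g = insert h E := by
    rw [hE, Finset.erase_insert_of_ne hgh.symm]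
  have h1 := hsub A (A ∪ B) Finset.subset_union_left hABG h hh hhAB
  have h2 := hsub E (insert h E) (Finset.subset_insert _ _)
    (Finset.insert_subset hh hEG) g hgG hghE
  have h3 := hsub A E hAE hEG h hh hhE
  rw [hinsgE, hinsghE] at h2
  rw [heraseh]
  nlinarith [mul_nonneg hx0 (sub_nonneg.mpr (le_of_sub_nonneg (by linarith : (0:ℝ) ≤ (v (A ∪ B) - v E) - (v (insert h (A ∪ B)) - v (insert h E)))))]
end

section
/- Consider $n = 2$ agents with weights $w_1 = 1$, $w_2 = 2$, and $m \ge 6$ goods. Agent 1's valuation is additive with value $1$ for each good (so $v_1(S) = |S|$); agent 2's valuation satisfies $v_2(\emptyset) = 0$ and $v_2(S) = 1$ for all nonempty $S$. Then there is no complete allocation $(A_1, A_2)$ (i.e., $A_1 \cup A_2 = G$, $A_1 \cap A_2 = \emptyset$) satisfying weighted envy-freeness up to one good: namely, for each $i \ne j$ with $A_j \ne \emptyset$, there exists $g \in A_j$ with $\frac{v_i(A_i)}{w_i} \ge \frac{v_i(A_j \setminus \{g\})}{w_j}$, and the condition also holds vacuously when $A_j = \emptyset$. -/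
theorem stmt13 {α : Type*} [DecidableEq α] (G : Finset α) (hG : 6 ≤ G.card)
    (v1 v2 : Finset α → ℝ)
    (hv1 : ∀ S : Finset α, v1 S = S.card)
    (hv2empty : v2 ∅ = 0)
    (hv2 : ∀ S : Finset α, S.Nonempty → v2 S = 1) :
    ¬ ∃ A1 A2 : Finset α, A1 ∪ A2 = G ∧ Disjoint A1 A2 ∧
      (A2 = ∅ ∨ ∃ g ∈ A2, v1 A1 / 1 ≥ v1 (A2.erase g) / 2) ∧
      (A1 = ∅ ∨ ∃ g ∈ A1, v2 A2 / 2 ≥ v2 (A1.erase g) / 1) := by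
  rintro ⟨A1, A2, hun, hdisj, h1, h2⟩
  have hcard : A1.card + A2.card = G.card := by
    rw [← hun, Finset.card_union_of_disjoint hdisj]
  by_cases hA1 : 2 ≤ A1.card
  · -- agent 2's condition fails
    rcases h2 with h2 | ⟨g, hg, h2⟩
    · simp [h2] at hA1
    · have herase : (A1.erase g).Nonempty := by
        rw [← Finset.card_pos, Finset.card_erase_of_mem hg]; omega
      have hv2A2 : v2 A2 ≤ 1 := by
        rcases A2.eq_empty_or_nonempty with h | h
        · simp [h, hv2empty]
        · rw [hv2 _ h]
      rw [hv2 _ herase] at h2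
      norm_num at h2
      linarith
  · -- |A1| ≤ 1, so |A2| ≥ 5
    push_neg at hA1
    have hA2 : 5 ≤ A2.card := by omega
    rcases h1 with h1 | ⟨g, hg, h1⟩
    · simp [h1] at hA2
    · rw [hv1, hv1, Finset.card_erase_of_mem hg] at h1
      have h4 : (4 : ℝ) ≤ ((A2.card - 1 : ℕ) : ℝ) := by
        exact_mod_cast Nat.le_sub_one_of_lt (by omega)
      have hle : (A1.card : ℝ) ≤ 1 := by exact_mod_cast Nat.lt_succ_iff.mp hA1
      norm_num at h1
      linarith
end

section
/- Let $n = 2$ agents have equal weights, and let there be $m = 3$ goods $g_1, g_2, g_3$ with additive valuations $v_1(g_1) = 0$, $v_1(g_2) = v_1(g_3) = 4$, $v_2(g_1) = 1.9$, $v_2(g_2) = v_2(g_3) = 2$. Define the extended harmonic function $H_x = \int_0^1 \frac{1 - t^x}{1 - t}\,dt$ for $x \ge 0$. Then every complete allocation $(A_1, A_2)$ maximizing $H_{v_1(A_1)} + H_{v_2(A_2)}$ gives $A_1 = \{g_2, g_3\}$ and $A_2 = \{g_1\}$, and this allocation violates EF1: $v_2(A_2) < v_2(A_1 \setminus \{g\})$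 for every $g \in A_1$. -/
open MeasureTheory intervalIntegral Set

noncomputable def Hfun (x : ℝ) : ℝ := ∫ t in (0:ℝ)..1, (1 - t ^ x) / (1 - t)

-- pointwise bound on Ioc 0 1
lemma Hfun_bound {x : ℝ} (hx : 0 ≤ x) {t : ℝ} (ht : t ∈ Set.Ioc (0:ℝ) 1) :
    ‖(1 - t ^ x) / (1 - t)‖ ≤ x + 1 := by
  obtain ⟨ht0, ht1⟩ := ht
  rcases eq_or_lt_of_le ht1 with h1 | h1
  · subst h1; simp [Real.one_rpow]; linarith
  · have htx0 : (0:ℝ) ≤ t ^ x := Real.rpow_nonneg ht0.le x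
    have htx1 : t ^ x ≤ 1 := Real.rpow_le_one ht0.le ht1 hx
    have hnum : (0:ℝ) ≤ 1 - t ^ x := by linarith
    have hden : (0:ℝ) < 1 - t := by linarith
    rw [Real.norm_eq_abs, abs_of_nonneg (div_nonneg hnum hden.le)]
    rw [div_le_iff₀ hden]
    rcases le_or_gt 1 x with hx1 | hx1
    · have := one_add_mul_self_le_rpow_one_add (s := t - 1) (by linarith) hx1
      have h2 : 1 + x * (t - 1) ≤ t ^ x := by
        simpa using this
      nlinarith
    · have : t ^ (1:ℝ) ≤ t ^ x := Real.rpow_le_rpow_of_exponent_ge ht0 ht1 hx1.le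
      rw [Real.rpow_one] at this
      nlinarith

lemma Hfun_intble {x : ℝ} (hx : 0 ≤ x) :
    IntervalIntegrable (fun t : ℝ => (1 - t ^ x) / (1 - t)) volume 0 1 := by
  rw [intervalIntegrable_iff_integrableOn_Ioc_of_le (by norm_num)]
  apply Measure.integrableOn_of_bounded (M := x + 1)
  · simp
  · exact ((measurable_const.sub (measurable_id.pow_const x)).div
      (measurable_const.sub measurable_id)).aestronglyMeasurable
  · exact (ae_restrict_mem measurableSet_Ioc).mono fun t ht => Hfun_bound hx ht

lemma Hfun_step {x : ℝ} (hx : 0 ≤ x) : Hfun (x + 1) = Hfun x + 1 / (x + 1) := by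
  have key : ∫ t in (0:ℝ)..1, (1 - t ^ (x+1)) / (1 - t)
      = ∫ t in (0:ℝ)..1, ((1 - t ^ x) / (1 - t) + t ^ x) := by
    apply intervalIntegral.integral_congr_ae
    rw [Set.uIoc_of_le (by norm_num : (0:ℝ) ≤ 1)]
    filter_upwards [compl_mem_ae_iff.2 (measure_singleton (1:ℝ))] with t ht1 ht
    obtain ⟨ht0, htle⟩ := ht
    have ht1' : t < 1 := lt_of_le_of_ne htle (by simpa using ht1)
    have hden : (1:ℝ) - t ≠ 0 := by linarith
    have : t ^ (x + 1) = t ^ x * t := by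
      rw [Real.rpow_add ht0, Real.rpow_one]
    rw [this]
    field_simp
    ring
  have hrpow : IntervalIntegrable (fun t : ℝ => t ^ x) volume 0 1 :=
    intervalIntegral.intervalIntegrable_rpow (by left; exact hx)
  have := intervalIntegral.integral_add (Hfun_intble hx) hrpow
  unfold Hfun
  rw [key, this, integral_rpow (Or.inl (by linarith))]
  rw [Real.one_rpow, Real.zero_rpow (by linarith)]
  ring

lemma Hfun_pt_nonneg {y : ℝ} (hy : 0 ≤ y) {t : ℝ} (ht : t ∈ Set.Icc (0:ℝ) 1) :
    0 ≤ (1 - t ^ y) / (1 - t) := by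
  obtain ⟨ht0, ht1⟩ := ht
  rcases eq_or_lt_of_le ht1 with h1 | h1
  · subst h1; simp
  · exact div_nonneg (by linarith [Real.rpow_le_one ht0 ht1 hy]) (by linarith)

lemma Hfun_mono {x y : ℝ} (hx : 0 ≤ x) (hxy : x ≤ y) : Hfun x ≤ Hfun y := by
  have hy : 0 ≤ y := le_trans hx hxy
  apply intervalIntegral.integral_mono_on (by norm_num) (Hfun_intble hx) (Hfun_intble hy)
  intro t ht
  obtain ⟨ht0, ht1⟩ := ht
  rcases eq_or_lt_of_le ht1 with h1 | h1
  · subst h1; simp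
  · rcases eq_or_lt_of_le ht0 with h0 | h0
    · subst h0
      rcases eq_or_lt_of_le hx with hx0 | hx0
      · rw [← hx0]; simpa using Hfun_pt_nonneg hy ⟨le_refl _, ht1⟩
      · rw [Real.zero_rpow (by linarith), Real.zero_rpow (by linarith)]
    · gcongr (1 - ?_) / (1 - t)
      · exact Real.rpow_le_rpow_of_exponent_ge h0 h1.le hxy

lemma Hfun_upper {x y : ℝ} (hx : 0 ≤ x) (hxy : x ≤ y) (hy1 : y ≤ x + 1) :
    Hfun y ≤ Hfun x + 1 / (x + 1) := by
  have hy : 0 ≤ y := le_trans hx hxy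
  have key : Hfun y ≤ ∫ t in (0:ℝ)..1, ((1 - t ^ x) / (1 - t) + t ^ x) := by
    apply intervalIntegral.integral_mono_on (by norm_num) (Hfun_intble hy)
      ((Hfun_intble hx).add (intervalIntegral.intervalIntegrable_rpow (Or.inl hx)))
    intro t ht
    obtain ⟨ht0, ht1⟩ := ht
    rcases eq_or_lt_of_le ht1 with h1 | h1
    · subst h1; simp [Real.one_rpow]
    · rcases eq_or_lt_of_le ht0 with h0 | h0
      · subst h0
        rcases eq_or_lt_of_le hx with hx0 | hx0
        · rw [← hx0]
          simp only [Real.rpow_zero]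
          have : (0:ℝ) ^ y ≥ 0 := Real.rpow_nonneg (le_refl 0) y
          have h2 : (0:ℝ)^y ≤ 1 := Real.rpow_le_one (le_refl 0) (by norm_num) hy
          simp; positivity
        · rw [Real.zero_rpow (by linarith)]
          rcases eq_or_lt_of_le hy with hy0 | hy0
          · exfalso; rw [← hy0] at hxy; linarith
          · rw [Real.zero_rpow (by linarith)]; norm_num
      · have hden : (0:ℝ) < 1 - t := by linarith
        rw [div_add' _ _ _ hden.ne', div_le_div_iff_of_pos_right hden]
        have h2 : t ^ (x+1) ≤ t ^ y := Real.rpow_le_rpow_of_exponent_ge h0 h1.le hy1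
        rw [Real.rpow_add h0, Real.rpow_one] at h2
        nlinarith
  calc Hfun y ≤ _ := key
    _ = Hfun x + 1 / (x+1) := by
        rw [intervalIntegral.integral_add (Hfun_intble hx)
          (intervalIntegral.intervalIntegrable_rpow (Or.inl hx)),
          integral_rpow (Or.inl (by linarith)), Real.one_rpow,
          Real.zero_rpow (by linarith)]
        unfold Hfun; ring

lemma Hfun0 : Hfun 0 = 0 := by
  unfold Hfun; simp

lemma Hfun1 : Hfun 1 = 1 := by
  have := Hfun_step (x := 0) (le_refl 0)
  rw [Hfun0] at this; norm_num at this; exact this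

lemma Hfun2 : Hfun 2 = 3/2 := by
  have := Hfun_step (x := 1) (by norm_num)
  rw [Hfun1] at this; norm_num at this; exact this

lemma Hfun3 : Hfun 3 = 11/6 := by
  have := Hfun_step (x := 2) (by norm_num)
  rw [Hfun2] at this; norm_num at this; exact this

lemma Hfun4 : Hfun 4 = 25/12 := by
  have := Hfun_step (x := 3) (by norm_num)
  rw [Hfun3] at this; norm_num at this; exact this

lemma Hfun5 : Hfun 5 = 137/60 := by
  have := Hfun_step (x := 4) (by norm_num)
  rw [Hfun4] at this; norm_num at this; exact this

lemma Hfun6 : Hfun 6 = 49/20 := by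
  have := Hfun_step (x := 5) (by norm_num)
  rw [Hfun5] at this; norm_num at this; exact this

lemma Hfun7 : Hfun 7 = 363/140 := by
  have := Hfun_step (x := 6) (by norm_num)
  rw [Hfun6] at this; norm_num at this; exact this

lemma Hfun8 : Hfun 8 = 761/280 := by
  have := Hfun_step (x := 7) (by norm_num)
  rw [Hfun7] at this; norm_num at this; exact this

lemma Hfun39 : Hfun 3.9 = Hfun 1.9 + 10/29 + 10/39 := by
  have s1 := Hfun_step (x := 1.9) (by norm_num)
  have s2 := Hfun_step (x := 2.9) (by norm_num)
  norm_num at s1 s2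
  have e1 : (3.9:ℝ) = 39/10 := by norm_num
  have e2 : (1.9:ℝ) = 19/10 := by norm_num
  rw [e1, e2, s2, s1]

lemma Hfun19_ge : 1 ≤ Hfun 1.9 := Hfun1 ▸ Hfun_mono (by norm_num) (by norm_num)

lemma Hfun59_le : Hfun 5.9 ≤ 49/20 := Hfun6 ▸ Hfun_mono (by norm_num) (by norm_num)

theorem stmt14
    (val1 val2 : Fin 3 → ℝ)
    (h1 : val1 = ![0, 4, 4]) (h2 : val2 = ![1.9, 2, 2])
    (V1 V2 : Finset (Fin 3) → ℝ)
    (hV1 : ∀ S, V1 S = ∑ g ∈ S, val1 g) (hV2 : ∀ S, V2 S = ∑ g ∈ S, val2 g)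
    (H : ℝ → ℝ) (hH : ∀ x : ℝ, H x = ∫ t in (0:ℝ)..1, (1 - t ^ x) / (1 - t)) :
    ∀ A1 A2 : Finset (Fin 3), A1 ∪ A2 = Finset.univ → Disjoint A1 A2 →
      (∀ B1 B2 : Finset (Fin 3), B1 ∪ B2 = Finset.univ → Disjoint B1 B2 →
        H (V1 B1) + H (V2 B2) ≤ H (V1 A1) + H (V2 A2)) →
      (A1 = {1, 2} ∧ A2 = {0} ∧ ∀ g ∈ A1, V2 A2 < V2 (A1.erase g)) := by
  have hHf : ∀ x : ℝ, H x = Hfun x := hH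
  intro A1 A2 hun hdis hmax
  have hA2 : A2 = A1ᶜ := by
    ext x
    simp only [Finset.mem_compl]
    constructor
    · intro hx hx1
      exact (Finset.disjoint_left.1 hdis) hx1 hx
    · intro hx
      have : x ∈ A1 ∪ A2 := hun ▸ Finset.mem_univ x
      rcases Finset.mem_union.1 this with h | h
      · exact absurd h hx
      · exact h
  subst hA2
  -- value of the candidate allocation
  have hB : H (V1 {1, 2}) + H (V2 {0}) ≤ H (V1 A1) + H (V2 A1ᶜ) :=
    hmax {1, 2} {0} (by decide) (by decide)
  have hV1B : V1 {1, 2} = 8 := by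
    rw [hV1]
    rw [Finset.sum_insert (by decide), Finset.sum_singleton, h1]
    norm_num [Matrix.cons_val_two]
  have hV2B : V2 {0} = 1.9 := by
    rw [hV2, Finset.sum_singleton, h2]
    norm_num
  rw [hV1B, hV2B, hHf, hHf, hHf, hHf] at hB
  have ha1 : 1 ≤ Hfun 1.9 := Hfun19_ge
  have ha2 : Hfun 1.9 ≤ 3/2 := Hfun2 ▸ Hfun_mono (by norm_num) (by norm_num)
  have hcases : ∀ S : Finset (Fin 3), S = ∅ ∨ S = {0} ∨ S = {1} ∨ S = {2} ∨
      S = {0, 1} ∨ S = {0, 2} ∨ S = {1, 2} ∨ S = {0, 1, 2} := by decide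
  rcases hcases A1 with h | h | h | h | h | h | h | h <;> subst h
  -- A1 = ∅
  · exfalso
    have e1 : V1 (∅ : Finset (Fin 3)) = 0 := by rw [hV1]; simp
    have e2 : V2 (∅ : Finset (Fin 3))ᶜ = 5.9 := by
      rw [show (∅ : Finset (Fin 3))ᶜ = {0, 1, 2} from by decide, hV2, h2,
        Finset.sum_insert (by decide), Finset.sum_insert (by decide), Finset.sum_singleton]
      norm_num [Matrix.cons_val_two]
    rw [e1, e2, Hfun0, Hfun8] at hB
    have h59 : Hfun 5.9 ≤ 49/20 := Hfun59_le
    linarith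
  -- A1 = {0}
  · exfalso
    have e1 : V1 ({0} : Finset (Fin 3)) = 0 := by
      rw [hV1, Finset.sum_singleton, h1]; norm_num
    have e2 : V2 ({0} : Finset (Fin 3))ᶜ = 4 := by
      rw [show ({0} : Finset (Fin 3))ᶜ = {1, 2} from by decide, hV2, h2,
        Finset.sum_insert (by decide), Finset.sum_singleton]
      norm_num [Matrix.cons_val_two]
    rw [e1, e2, Hfun0, Hfun8, Hfun4] at hB
    linarith
  -- A1 = {1}
  · exfalso
    have e1 : V1 ({1} : Finset (Fin 3)) = 4 := by
      rw [hV1, Finset.sum_singleton, h1]; norm_num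
    have e2 : V2 ({1} : Finset (Fin 3))ᶜ = 3.9 := by
      rw [show ({1} : Finset (Fin 3))ᶜ = {0, 2} from by decide, hV2, h2,
        Finset.sum_insert (by decide), Finset.sum_singleton]
      norm_num [Matrix.cons_val_two]
    rw [e1, e2, Hfun8, Hfun4, Hfun39] at hB
    linarith
  -- A1 = {2}
  · exfalso
    have e1 : V1 ({2} : Finset (Fin 3)) = 4 := by
      rw [hV1, Finset.sum_singleton, h1]; norm_num [Matrix.cons_val_two]
    have e2 : V2 ({2} : Finset (Fin 3))ᶜ = 3.9 := by
      rw [show ({2} : Finset (Fin 3))ᶜ = {0, 1} from by decide, hV2, h2,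
        Finset.sum_insert (by decide), Finset.sum_singleton]
      norm_num
    rw [e1, e2, Hfun8, Hfun4, Hfun39] at hB
    linarith
  -- A1 = {0, 1}
  · exfalso
    have e1 : V1 ({0, 1} : Finset (Fin 3)) = 4 := by
      rw [hV1, Finset.sum_insert (by decide), Finset.sum_singleton, h1]; norm_num
    have e2 : V2 ({0, 1} : Finset (Fin 3))ᶜ = 2 := by
      rw [show ({0, 1} : Finset (Fin 3))ᶜ = {2} from by decide, hV2, h2,
        Finset.sum_singleton]
      norm_num [Matrix.cons_val_two]
    rw [e1, e2, Hfun8, Hfun4, Hfun2] at hB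
    linarith
  -- A1 = {0, 2}
  · exfalso
    have e1 : V1 ({0, 2} : Finset (Fin 3)) = 4 := by
      rw [hV1, Finset.sum_insert (by decide), Finset.sum_singleton, h1]; norm_num [Matrix.cons_val_two]
    have e2 : V2 ({0, 2} : Finset (Fin 3))ᶜ = 2 := by
      rw [show ({0, 2} : Finset (Fin 3))ᶜ = {1} from by decide, hV2, h2,
        Finset.sum_singleton]
      norm_num
    rw [e1, e2, Hfun8, Hfun4, Hfun2] at hB
    linarith
  -- A1 = {1, 2} : good case
  · refine ⟨rfl, by decide, ?_⟩
    intro g hg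
    have hc : ({1, 2} : Finset (Fin 3))ᶜ = {0} := by decide
    fin_cases hg
    · rw [hc, show ({1, 2} : Finset (Fin 3)).erase 1 = {2} from by decide,
        hV2, hV2, Finset.sum_singleton, Finset.sum_singleton, h2]
      norm_num [Matrix.cons_val_two]
    · rw [hc, show ({1, 2} : Finset (Fin 3)).erase 2 = {1} from by decide,
        hV2, hV2, Finset.sum_singleton, Finset.sum_singleton, h2]
      norm_num [Matrix.cons_val_two]
  -- A1 = {0, 1, 2}
  · exfalso
    have e1 : V1 ({0, 1, 2} : Finset (Fin 3)) = 8 := by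
      rw [hV1, Finset.sum_insert (by decide), Finset.sum_insert (by decide),
        Finset.sum_singleton, h1]
      norm_num [Matrix.cons_val_two]
    have e2 : V2 ({0, 1, 2} : Finset (Fin 3))ᶜ = 0 := by
      rw [show ({0, 1, 2} : Finset (Fin 3))ᶜ = ∅ from by decide, hV2]; simp
    rw [e1, e2, Hfun8, Hfun0] at hB
    linarith
end

section
/- Suppose $n$ agents have equal weights and additive valuations where each agent's value for each good is a non-negative integer. Let $\mathcal{A} = (A_1, \dots, A_n)$ be an allocation maximizing the harmonic welfare $\sum_{i=1}^n H_{v_i(A_i)}$, where $H_k = \sum_{\ell=1}^k 1/\ell$ and $H_0 = 0$. Then $\mathcal{A}$ satisfies EF1: for all agents $i, j$ with $A_j \ne \emptyset$, there exists $g \in A_j$ with $v_i(A_i) \ge v_i(A_j) - v_i(g)$. -/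
/-- The harmonic number `H_k = ∑_{ℓ=1}^k 1/ℓ`, with `H_0 = 0`. -/
noncomputable def harmonicNum (k : ℕ) : ℝ := ∑ ℓ ∈ Finset.Icc 1 k, (1 : ℝ) / ℓ

lemma harmSucc (n : ℕ) : harmonicNum (n + 1) = harmonicNum n + 1 / ((n : ℝ) + 1) := by
  unfold harmonicNum
  rw [Finset.sum_Icc_succ_top (by omega : 1 ≤ n + 1)]
  push_cast
  ring

lemma harm_gap (m : ℕ) : ∀ t : ℕ,
    harmonicNum (m + t) = harmonicNum m + ∑ j ∈ Finset.range t, (1 : ℝ) / ((m + t - j : ℕ) : ℝ)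
  | 0 => by simp
  | (t + 1) => by
    have ih := harm_gap m t
    have h1 : m + (t + 1) = (m + t) + 1 := by omega
    rw [h1, harmSucc, ih, Finset.sum_range_succ']
    have h2 : ∀ j ∈ Finset.range t,
        (1 : ℝ) / ((m + t + 1 - (j + 1) : ℕ) : ℝ) = 1 / ((m + t - j : ℕ) : ℝ) := by
      intro j hj
      have : m + t + 1 - (j + 1) = m + t - j := by omega
      rw [this]
    rw [Finset.sum_congr rfl h2]
    have h3 : (m + t + 1 - 0 : ℕ) = m + t + 1 := by omega
    rw [h3]
    push_cast
    ring

lemma harm_lt (a x : ℕ) (hx : 0 < x) : harmonicNum a < harmonicNum (a + x) := by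
  rw [harm_gap a x]
  have hpos : 0 < ∑ j ∈ Finset.range x, (1 : ℝ) / ((a + x - j : ℕ) : ℝ) := by
    apply Finset.sum_pos
    · intro j hj
      have hj' : j < x := Finset.mem_range.mp hj
      have h0 : 0 < a + x - j := by omega
      have : (0 : ℝ) < ((a + x - j : ℕ) : ℝ) := by exact_mod_cast h0
      positivity
    · exact ⟨0, Finset.mem_range.mpr hx⟩
  linarith

lemma sum_div_cycle (f : ℕ → ℝ) (x : ℕ) (hx : 0 < x) :
    ∀ y : ℕ, ∑ u ∈ Finset.range (x * y), f (u / x) = (x : ℝ) * ∑ k ∈ Finset.range y, f k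
  | 0 => by simp
  | (y + 1) => by
    have ih := sum_div_cycle f x hx y
    have h1 : x * (y + 1) = x * y + x := by ring
    rw [h1, Finset.range_eq_Ico,
      ← Finset.sum_Ico_consecutive _ (Nat.zero_le (x * y)) (Nat.le_add_right (x * y) x),
      ← Finset.range_eq_Ico, Finset.sum_Ico_eq_sum_range]
    have h2 : ∀ r ∈ Finset.range (x * y + x - x * y), f ((x * y + r) / x) = f y := by
      intro r hr
      have hr' : r < x := by have := Finset.mem_range.mp hr; omega
      congr 1
      rw [Nat.mul_add_div hx]
      simp [Nat.div_eq_of_lt hr']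
    rw [Finset.sum_congr rfl h2, ih]
    have h3 : x * y + x - x * y = x := by omega
    rw [h3, Finset.sum_const, Finset.card_range, Finset.sum_range_succ]
    simp [nsmul_eq_mul]
    ring

lemma ptwise (x y m b c u : ℕ) (hy : 0 < y) (hm : m + 1 ≤ c) (hr : y * c ≤ x * b)
    (hj : u / y < m) (hk : u / x < b) :
    (y : ℝ) * (1 / ((b - u / x : ℕ) : ℝ)) < (x : ℝ) * (1 / ((m - u / y : ℕ) : ℝ)) := by
  have h3 : x * (u / x) ≤ u := Nat.mul_div_le u x
  have h4 : u < y * (u / y) + y := by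
    conv_lhs => rw [← Nat.div_add_mod u y]
    have := Nat.mod_lt u hy
    omega
  have hkey : (y : ℤ) * ((m : ℤ) - (u / y : ℕ)) < (x : ℤ) * ((b : ℤ) - (u / x : ℕ)) := by
    have c3 : (x : ℤ) * ((u / x : ℕ) : ℤ) ≤ (u : ℤ) := by exact_mod_cast h3
    have c4 : (u : ℤ) < (y : ℤ) * ((u / y : ℕ) : ℤ) + y := by exact_mod_cast h4
    have c5 : (y : ℤ) * ((m : ℤ) + 1) ≤ (y : ℤ) * c := by
      have : y * (m + 1) ≤ y * c := Nat.mul_le_mul_left y hm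
      exact_mod_cast this
    have c6 : (y : ℤ) * c ≤ (x : ℤ) * b := by exact_mod_cast hr
    nlinarith [c3, c4, c5, c6]
  have hb0 : (0 : ℝ) < ((b - u / x : ℕ) : ℝ) := by
    have : 0 < b - u / x := by omega
    exact_mod_cast this
  have hm0 : (0 : ℝ) < ((m - u / y : ℕ) : ℝ) := by
    have : 0 < m - u / y := by omega
    exact_mod_cast this
  rw [mul_one_div, mul_one_div, div_lt_div_iff₀ hb0 hm0]
  have hcast : (y : ℝ) * ((m : ℝ) - (u / y : ℕ)) < (x : ℝ) * ((b : ℝ) - (u / x : ℕ)) := by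
    exact_mod_cast hkey
  have em : ((m - u / y : ℕ) : ℝ) = (m : ℝ) - ((u / y : ℕ) : ℝ) := by
    rw [Nat.cast_sub hj.le]
  have eb : ((b - u / x : ℕ) : ℝ) = (b : ℝ) - ((u / x : ℕ) : ℝ) := by
    rw [Nat.cast_sub hk.le]
  rw [em, eb]
  exact hcast

lemma keyA (a x b' y c : ℕ) (hx : 0 < x) (hy : 0 < y)
    (henvy : a + x + 1 ≤ c) (hratio : y * c ≤ x * (b' + y)) :
    harmonicNum (b' + y) + harmonicNum a < harmonicNum b' + harmonicNum (a + x) := by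
  have hT1 := harm_gap b' y
  have hT2 := harm_gap a x
  suffices hlt : (∑ j ∈ Finset.range y, (1 : ℝ) / ((b' + y - j : ℕ) : ℝ))
      < ∑ j ∈ Finset.range x, (1 : ℝ) / ((a + x - j : ℕ) : ℝ) by linarith
  have key1 := sum_div_cycle (fun k => (1 : ℝ) / ((b' + y - k : ℕ) : ℝ)) x hx y
  have key2 := sum_div_cycle (fun k => (1 : ℝ) / ((a + x - k : ℕ) : ℝ)) y hy x
  have hsum : ∑ u ∈ Finset.range (x * y), (y : ℝ) * ((1 : ℝ) / ((b' + y - u / x : ℕ) : ℝ))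
      < ∑ u ∈ Finset.range (x * y), (x : ℝ) * ((1 : ℝ) / ((a + x - u / y : ℕ) : ℝ)) := by
    apply Finset.sum_lt_sum_of_nonempty
    · exact ⟨0, Finset.mem_range.mpr (Nat.mul_pos hx hy)⟩
    · intro u hu
      have hu' := Finset.mem_range.mp hu
      apply ptwise x y (a + x) (b' + y) c u hy (by omega) hratio
      · exact ((Nat.div_lt_iff_lt_mul hy).mpr (by omega)).trans_le (Nat.le_add_left x a)
      · exact ((Nat.div_lt_iff_lt_mul hx).mpr (by rw [Nat.mul_comm y x]; exact (Finset.mem_range.mp hu))).trans_le (Nat.le_add_left y b')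
  have e1 : ∑ u ∈ Finset.range (x * y), (y : ℝ) * ((1 : ℝ) / ((b' + y - u / x : ℕ) : ℝ))
      = (y : ℝ) * ((x : ℝ) * ∑ j ∈ Finset.range y, (1 : ℝ) / ((b' + y - j : ℕ) : ℝ)) := by
    rw [← Finset.mul_sum, key1]
  have e2 : ∑ u ∈ Finset.range (x * y), (x : ℝ) * ((1 : ℝ) / ((a + x - u / y : ℕ) : ℝ))
      = (x : ℝ) * ((y : ℝ) * ∑ j ∈ Finset.range x, (1 : ℝ) / ((a + x - j : ℕ) : ℝ)) := by
    rw [← Finset.mul_sum, show x * y = y * x from Nat.mul_comm x y, key2]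
  rw [e1, e2] at hsum
  have hx0 : (0 : ℝ) < (x : ℝ) := by exact_mod_cast hx
  have hy0 : (0 : ℝ) < (y : ℝ) := by exact_mod_cast hy
  nlinarith [hsum, mul_pos hx0 hy0]

theorem stmt15 {α : Type*} [DecidableEq α] (G : Finset α) (n : ℕ)
    (val : Fin n → α → ℕ)
    (V : Fin n → Finset α → ℕ) (hV : ∀ i S, V i S = ∑ g ∈ S, val i g)
    (A : Fin n → Finset α)
    (hAG : ∀ i, A i ⊆ G)
    (hdisj : ∀ i j, i ≠ j → Disjoint (A i) (A j))
    (hmax : ∀ B : Fin n → Finset α, (∀ i, B i ⊆ G) →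
      (∀ i j, i ≠ j → Disjoint (B i) (B j)) →
      ∑ i, harmonicNum (V i (B i)) ≤ ∑ i, harmonicNum (V i (A i))) :
    ∀ i j : Fin n, (A j).Nonempty →
      ∃ g ∈ A j, (V i (A i) : ℤ) ≥ (V i (A j) : ℤ) - (val i g : ℤ) := by
  intro i j hAj
  by_cases hij : i = j
  · subst hij
    obtain ⟨g, hg⟩ := hAj
    exact ⟨g, hg, by omega⟩
  · by_contra hcon
    push_neg at hcon
    have henvy : ∀ g ∈ A j, V i (A i) + val i g + 1 ≤ V i (A j) := by
      intro g hg
      have := hcon g hg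
      omega
    obtain ⟨g0, hg0⟩ := hAj
    have hcpos : 0 < V i (A j) := by have := henvy g0 hg0; omega
    have hex : ∃ g ∈ A j, 0 < val i g := by
      by_contra hno
      push_neg at hno
      have hz : V i (A j) = 0 := by
        rw [hV]
        exact Finset.sum_eq_zero fun g hg => by have := hno g hg; omega
      omega
    have hSne : ((A j).filter (fun g => 0 < val i g)).Nonempty := by
      obtain ⟨g, hg, hgpos⟩ := hex
      exact ⟨g, Finset.mem_filter.mpr ⟨hg, hgpos⟩⟩
    obtain ⟨g', hg'S, hmin⟩ := Finset.exists_min_image _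
      (fun g => (val j g : ℝ) / (val i g)) hSne
    obtain ⟨hg'Aj, hx'pos⟩ := Finset.mem_filter.mp hg'S
    have hcross : ∀ g ∈ A j, val j g' * val i g ≤ val i g' * val j g := by
      intro g hg
      by_cases hxg : 0 < val i g
      · have hmg := hmin g (Finset.mem_filter.mpr ⟨hg, hxg⟩)
        have h1 : (0 : ℝ) < (val i g : ℝ) := by exact_mod_cast hxg
        have h2 : (0 : ℝ) < (val i g' : ℝ) := by exact_mod_cast hx'pos
        rw [div_le_div_iff₀ h2 h1] at hmg
        have : (val j g' : ℝ) * (val i g : ℝ) ≤ (val i g' : ℝ) * (val j g : ℝ) := by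
          linarith
        exact_mod_cast this
      · have hz : val i g = 0 := by omega
        simp [hz]
    have hratio : val j g' * V i (A j) ≤ val i g' * V j (A j) := by
      rw [hV, hV, Finset.mul_sum, Finset.mul_sum]
      exact Finset.sum_le_sum hcross
    set B := Function.update (Function.update A i (insert g' (A i))) j ((A j).erase g')
      with hBdef
    have hBi : B i = insert g' (A i) := by
      rw [hBdef, Function.update_of_ne hij, Function.update_self]
    have hBj : B j = (A j).erase g' := by rw [hBdef, Function.update_self]
    have hBk : ∀ k, k ≠ i → k ≠ j → B k = A k := by
      intro k hki hkj
      rw [hBdef, Function.update_of_ne hkj, Function.update_of_ne hki]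
    have hg'niAk : ∀ k, k ≠ j → g' ∉ A k := by
      intro k hk hgk
      exact (Finset.disjoint_left.mp (hdisj k j hk) hgk) hg'Aj
    have hsub : ∀ k, B k ⊆ insert g' (A k) := by
      intro k
      by_cases h1 : k = i
      · subst h1; rw [hBi]
      · by_cases h2 : k = j
        · subst h2; rw [hBj]
          exact (Finset.erase_subset _ _).trans (Finset.subset_insert _ _)
        · rw [hBk k h1 h2]; exact Finset.subset_insert _ _
    have hgB : ∀ k, g' ∈ B k → k = i := by
      intro k hgk
      by_cases h1 : k = i
      · exact h1
      · exfalso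
        by_cases h2 : k = j
        · subst h2; rw [hBj] at hgk; exact (Finset.notMem_erase _ _) hgk
        · rw [hBk k h1 h2] at hgk; exact hg'niAk k h2 hgk
    have hBG : ∀ k, B k ⊆ G := by
      intro k
      refine (hsub k).trans ?_
      rw [Finset.insert_subset_iff]
      exact ⟨hAG j hg'Aj, hAG k⟩
    have hBdisj : ∀ k l, k ≠ l → Disjoint (B k) (B l) := by
      intro k l hkl
      rw [Finset.disjoint_left]
      intro g hgk hgl
      by_cases hgg : g = g'
      · subst hgg
        exact hkl ((hgB k hgk).trans (hgB l hgl).symm)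
      · have h1 := hsub k hgk
        have h2 := hsub l hgl
        rw [Finset.mem_insert] at h1 h2
        exact Finset.disjoint_left.mp (hdisj k l hkl)
          (h1.resolve_left hgg) (h2.resolve_left hgg) 
    have hopt := hmax B hBG hBdisj
    have hjU : j ∈ Finset.univ.erase i :=
      Finset.mem_erase.mpr ⟨fun h => hij h.symm, Finset.mem_univ j⟩
    have hsplitF : ∀ (C : Fin n → Finset α),
        ∑ k, harmonicNum (V k (C k)) = harmonicNum (V i (C i)) + harmonicNum (V j (C j))
          + ∑ k ∈ (Finset.univ.erase i).erase j, harmonicNum (V k (C k)) := by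
      intro C
      rw [← Finset.add_sum_erase _ _ (Finset.mem_univ i), ← Finset.add_sum_erase _ _ hjU]
      ring
    rw [hsplitF B, hsplitF A] at hopt
    have hrest : ∑ k ∈ (Finset.univ.erase i).erase j, harmonicNum (V k (B k))
        = ∑ k ∈ (Finset.univ.erase i).erase j, harmonicNum (V k (A k)) := by
      apply Finset.sum_congr rfl
      intro k hk
      rw [Finset.mem_erase, Finset.mem_erase] at hk
      rw [hBk k hk.2.1 hk.1]
    rw [hrest] at hopt
    have hg'nAi : g' ∉ A i := hg'niAk i hij
    have hVBi : V i (B i) = V i (A i) + val i g' := by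
      rw [hBi, hV, Finset.sum_insert hg'nAi, hV i (A i)]
      omega
    have hVb : V j (A j) = V j ((A j).erase g') + val j g' := by
      rw [hV, hV, ← Finset.add_sum_erase _ _ hg'Aj]
      omega
    have hVBj : V j (B j) = V j ((A j).erase g') := by rw [hBj]
    rw [hVBi, hVBj] at hopt
    have hkey : harmonicNum (V i (A i) + val i g') + harmonicNum (V j ((A j).erase g'))
        ≤ harmonicNum (V i (A i)) + harmonicNum (V j (A j)) := by linarith
    have hy'pos : 0 < val j g' := by
      by_contra hy0
      push_neg at hy0
      have hy0' : val j g' = 0 := by omega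
      rw [hVb, hy0'] at hkey
      have := harm_lt (V i (A i)) (val i g') hx'pos
      simp at hkey
      linarith
    have hfin := keyA (V i (A i)) (val i g') (V j ((A j).erase g')) (val j g') (V i (A j))
      hx'pos hy'pos (henvy g' hg'Aj) (by rw [← hVb]; omega)
    rw [hVb] at hkey
    have hcomm : V j ((A j).erase g') + val j g' = val j g' + V j ((A j).erase g') := by omega
    linarith [hfin]
end

section
/- Let $w_1, w_2 > 0$ and $x \in [0,1]$, and consider the infinite sequence of picks assigned greedily: maintaining counters $t_1, t_2$ initialized to $0$, each pick goes to an agent $i$ minimizing $\frac{t_i + (1-x)}{w_i}$ (ties broken arbitrarily), after which $t_i$ increments. Then after any finite prefix of the sequence in which agent $i$ has picked $t_i$ times and agent $j$ has picked $t_j \ge 1$ times, it holds that $t_i + (1-x) \ge \frac{w_i}{w_j}(t_j - x)$. -/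
theorem stmt19 (w : Fin 2 → ℝ) (hw : ∀ i, 0 < w i)
    (x : ℝ) (hx : x ∈ Set.Icc (0:ℝ) 1)
    (pick : ℕ → Fin 2)
    (hgreedy : ∀ s : ℕ, ∀ j : Fin 2,
      ((((Finset.range s).filter (fun k => pick k = pick s)).card : ℝ) + (1 - x)) / w (pick s) ≤
      ((((Finset.range s).filter (fun k => pick k = j)).card : ℝ) + (1 - x)) / w j) :
    ∀ s : ℕ, ∀ i j : Fin 2,
      1 ≤ ((Finset.range s).filter (fun k => pick k = j)).card →
      (((Finset.range s).filter (fun k => pick k = i)).card : ℝ) + (1 - x) ≥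
        (w i / w j) * ((((Finset.range s).filter (fun k => pick k = j)).card : ℝ) - x) := by
  intro s i j hj
  set T := (Finset.range s).filter (fun k => pick k = j) with hT
  have hTne : T.Nonempty := Finset.card_pos.mp (by omega)
  set m := T.max' hTne with hm
  have hmem : m ∈ T := T.max'_mem hTne
  have hms : m < s := Finset.mem_range.mp (Finset.mem_filter.mp hmem).1
  have hpm : pick m = j := (Finset.mem_filter.mp hmem).2
  -- T = insert m (filter on range m)
  have hTeq : T = insert m ((Finset.range m).filter (fun k => pick k = j)) := by
    ext k
    simp only [Finset.mem_insert, Finset.mem_filter, Finset.mem_range, hT]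
    constructor
    · rintro ⟨hk, hpk⟩
      have hle : k ≤ m := T.le_max' k (Finset.mem_filter.mpr ⟨Finset.mem_range.mpr hk, hpk⟩)
      rcases lt_or_eq_of_le hle with h | h
      · exact Or.inr ⟨h, hpk⟩
      · exact Or.inl h
    · rintro (rfl | ⟨hk, hpk⟩)
      · exact ⟨hms, hpm⟩
      · exact ⟨hk.trans hms, hpk⟩
  have hmnot : m ∉ (Finset.range m).filter (fun k => pick k = j) := by
    simp
  have hcard : T.card = ((Finset.range m).filter (fun k => pick k = j)).card + 1 := by
    rw [hTeq, Finset.card_insert_of_notMem hmnot]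
  have hsub : ((Finset.range m).filter (fun k => pick k = i)).card ≤
      ((Finset.range s).filter (fun k => pick k = i)).card := by
    apply Finset.card_le_card
    apply Finset.filter_subset_filter
    exact Finset.range_subset_range.mpr hms.le
  have hg := hgreedy m i
  rw [hpm] at hg
  have hwi := hw i
  have hwj := hw j
  rw [div_le_div_iff₀ hwj hwi] at hg
  have hcj : (((Finset.range m).filter (fun k => pick k = j)).card : ℝ) = (T.card : ℝ) - 1 := by
    rw [hcard]; push_cast; ring
  rw [hcj] at hg
  have hci : (((Finset.range m).filter (fun k => pick k = i)).card : ℝ) ≤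
      (((Finset.range s).filter (fun k => pick k = i)).card : ℝ) := by exact_mod_cast hsub
  rw [ge_iff_le, div_mul_eq_mul_div, div_le_iff₀ hwj]
  nlinarith [hg, hci, hwi.le, hwj.le]
end
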